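/- arXiv:1703.05876 — 5 statements merged into one kernel-verified Lean document; each statement's English description precedes it below -/
import Mathlib

section
/- Let d, D, N be natural numbers, let Π be a d×d complex matrix that is an orthogonal projection (Hermitian and idempotent) of rank D, let ρ₁,…,ρ_N be d×d density matrices (positive semidefinite, trace 1) each supported in the range of Π (i.e. Π ρᵢ Π = ρᵢ), and let M₁,…,M_N be positive semidefinite d×d matrices with Σᵢ Mᵢ = I (a POVM). Then the total success probability of discriminating the states satisfies Σᵢ Re Tr(Mᵢ ρᵢ) ≤ D; in particular, the average success probability (1/N) Σᵢ Re Tr(Mᵢ ρᵢ) is at most D/N. -/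
/-!
Since `ρᵢ = Π ρᵢ Π`, cyclicity of the trace gives `Tr(Mᵢ ρᵢ) = Tr(Π Mᵢ Π ρᵢ)`. A density matrix
satisfies `ρᵢ ≤ 1`, so this is at most `Tr(Π Mᵢ Π)`, and summing over the POVM leaves
`Tr(Π) = rank Π = D`.
-/

open scoped ComplexOrder MatrixOrder

namespace Matrix

variable {n 𝕜 : Type*} [Fintype n] [RCLike 𝕜]

theorem PosSemidef.le_one_of_trace_eq_one [DecidableEq n] {A : Matrix n n 𝕜} (hA : A.PosSemidef)
    (htr : A.trace = 1) : A ≤ 1 := by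
  have hsum : ∑ i, hA.1.eigenvalues i = 1 := by
    exact_mod_cast hA.1.trace_eq_sum_eigenvalues.symm.trans htr
  simpa using le_algebraMap_of_spectrum_le (R := ℝ) (a := A) (r := 1) fun x hx => by
    obtain ⟨i, rfl⟩ := hA.1.spectrum_real_eq_range_eigenvalues ▸ hx
    exact hsum ▸ Finset.single_le_sum (fun j _ => hA.eigenvalues_nonneg j) (Finset.mem_univ i)

theorem PosSemidef.trace_mul_nonneg [DecidableEq n] {A B : Matrix n n 𝕜} (hA : A.PosSemidef)
    (hB : B.PosSemidef) : 0 ≤ (A * B).trace := by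
  set S := CFC.sqrt A
  have hS : Sᴴ = S := (CFC.sqrt_nonneg A).isSelfAdjoint
  rw [← CFC.sqrt_mul_sqrt_self A hA.nonneg, ← trace_mul_cycle]
  simpa [hS] using (hB.mul_mul_conjTranspose_same S).trace_nonneg

theorem PosSemidef.trace_mul_le_trace [DecidableEq n] {A B : Matrix n n 𝕜} (hA : A.PosSemidef)
    (hB : B ≤ 1) : (A * B).trace ≤ A.trace := by
  have := hA.trace_mul_nonneg hB
  rwa [Matrix.mul_sub, Matrix.mul_one, trace_sub, sub_nonneg] at this

theorem trace_eq_rank_of_isIdempotentElem {K : Type*} [Field K] [DecidableEq n] {P : Matrix n n K}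
    (hP : IsIdempotentElem P) : P.trace = P.rank := by
  have hP' : IsIdempotentElem (toLin' P) := hP.map toLinAlgEquiv'
  rw [← trace_toLin'_eq, (LinearMap.IsIdempotentElem.isProj_range _ hP').trace, rank]
  rfl

theorem sum_trace_mul_le_rank {ι : Type*} [Fintype ι] [DecidableEq n] {P : Matrix n n 𝕜}
    (hP : P.IsHermitian) (hPP : IsIdempotentElem P) {ρ M : ι → Matrix n n 𝕜}
    (hρ : ∀ i, (ρ i).PosSemidef) (hρtr : ∀ i, (ρ i).trace = 1) (hsupp : ∀ i, P * ρ i * P = ρ i)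
    (hM : ∀ i, (M i).PosSemidef) (hMsum : ∑ i, M i = 1) :
    ∑ i, (M i * ρ i).trace ≤ P.rank := by
  have hterm (i : ι) : (M i * ρ i).trace ≤ (P * M i * P).trace :=
    calc (M i * ρ i).trace = (P * M i * P * ρ i).trace := by
          conv_lhs => rw [← hsupp i, ← mul_assoc, ← mul_assoc, trace_mul_comm]
          simp only [mul_assoc]
      _ ≤ (P * M i * P).trace := by
          refine PosSemidef.trace_mul_le_trace ?_ ((hρ i).le_one_of_trace_eq_one (hρtr i))
          simpa [hP.eq] using (hM i).mul_mul_conjTranspose_same P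
  calc ∑ i, (M i * ρ i).trace ≤ ∑ i, (P * M i * P).trace := Finset.sum_le_sum fun i _ => hterm i
    _ = P.rank := by
      rw [← trace_sum, ← Finset.sum_mul, ← Finset.mul_sum, hMsum, mul_one, hPP.eq,
        trace_eq_rank_of_isIdempotentElem hPP]

end Matrix

/-- The total success probability of discriminating `N` states
supported in the range of a rank-`D` projection, using a POVM, is at most `D`;
in particular the average success probability is at most `D / N`. -/
theorem stmt_0 (d D N : ℕ) (Pr : Matrix (Fin d) (Fin d) ℂ)
    (hHerm : Pr.IsHermitian) (hIdem : Pr * Pr = Pr) (hrank : Pr.rank = D)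
    (ρ : Fin N → Matrix (Fin d) (Fin d) ℂ)
    (hρpos : ∀ i, (ρ i).PosSemidef) (hρtr : ∀ i, (ρ i).trace = 1)
    (hsupp : ∀ i, Pr * ρ i * Pr = ρ i)
    (M : Fin N → Matrix (Fin d) (Fin d) ℂ)
    (hMpos : ∀ i, (M i).PosSemidef) (hMsum : ∑ i, M i = 1) :
    (∑ i, (Matrix.trace (M i * ρ i)).re ≤ (D : ℝ)) ∧
    (1 / (N : ℝ)) * ∑ i, (Matrix.trace (M i * ρ i)).re ≤ (D : ℝ) / (N : ℝ) := by
  have htotal : ∑ i, (Matrix.trace (M i * ρ i)).re ≤ (D : ℝ) := by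
    have := (Complex.le_def.mp
      (Matrix.sum_trace_mul_le_rank hHerm hIdem hρpos hρtr hsupp hMpos hMsum)).1
    simpa [hrank] using this
  refine ⟨htotal, ?_⟩
  rw [one_div_mul_eq_div]
  exact div_le_div_of_nonneg_right htotal N.cast_nonneg
end

section
/- (Mixing increases the inaccuracy.) Let ι be a nonempty finite index set, w : ι → ℝ nonnegative weights with Σᵢ wᵢ = 1, and for each i a nondecreasing function Fᵢ : [0,∞) → ℝ (the probability, under the i-th state, that a covariant measurement outcome falls within an interval of size δ around the true value). Fix P ∈ ℝ and assume that for each i there exists δ ≥ 0 with Fᵢ(δ) ≥ P. Define δᵢ = inf{δ ≥ 0 : Fᵢ(δ) ≥ P} and δ_mix = inf{δ ≥ 0 : Σᵢ wᵢ Fᵢ(δ) ≥ P}. Then δ_mix ≥ minᵢ δᵢ. -/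
/-! A δ lying in the set defining the inaccuracy of the mixture satisfies `P ≤ Σᵢ wᵢ Fᵢ(δ)`, and a
convex combination is at most the largest of its terms, so `P ≤ Fᵢ(δ)` for some `i`: δ also
lies in the set defining the inaccuracy of the `i`-th component. By monotonicity the mixture's
set contains the largest of the components' witnesses, so it is nonempty and its `sInf` is not
the junk value `sInf ∅ = 0`. -/

open Finset

namespace Finset

variable {ι : Type*} {s : Finset ι} {w f : ι → ℝ} {P : ℝ}

theorem exists_le_of_le_sum_mul (hw : ∀ i ∈ s, 0 ≤ w i) (hw₁ : ∑ i ∈ s, w i = 1)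
    (h : P ≤ ∑ i ∈ s, w i * f i) : ∃ i ∈ s, P ≤ f i := by
  have hsum := centerMass_le_sup (f := f) hw (hw₁ ▸ one_pos)
  rw [centerMass_eq_of_sum_1 _ _ hw₁] at hsum
  exact (le_sup'_iff _).mp (h.trans hsum)

theorem le_sum_mul_of_forall_le (hw : ∀ i ∈ s, 0 ≤ w i) (hw₁ : ∑ i ∈ s, w i = 1)
    (h : ∀ i ∈ s, P ≤ f i) : P ≤ ∑ i ∈ s, w i * f i :=
  calc P = ∑ i ∈ s, w i * P := by rw [← sum_mul, hw₁, one_mul]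
    _ ≤ ∑ i ∈ s, w i * f i := sum_le_sum fun i hi => mul_le_mul_of_nonneg_left (h i hi) (hw i hi)

theorem inf'_csInf_le_csInf {α : Type*} [ConditionallyCompleteLinearOrder α] (hs : s.Nonempty)
    {T : ι → Set α} {S : Set α} (hS : S.Nonempty) (hT : ∀ i ∈ s, BddBelow (T i))
    (hST : ∀ x ∈ S, ∃ i ∈ s, x ∈ T i) : s.inf' hs (fun i => sInf (T i)) ≤ sInf S :=
  le_csInf hS fun x hx =>
    let ⟨i, hi, hxi⟩ := hST x hx
    (inf'_le _ hi).trans (csInf_le (hT i hi) hxi)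

end Finset

/-- Mixing increases the inaccuracy: for a covariant measurement
on a mixture `ρ = Σᵢ wᵢ ρᵢ`, the inaccuracy of the mixture is at least the
minimum of the inaccuracies of the components. Here `F i δ` is the probability,
under the `i`-th state, that the outcome falls in an interval of size `δ`
around the true value, assumed nondecreasing in `δ ≥ 0`. -/
theorem stmt_3 {ι : Type*} [Fintype ι] [Nonempty ι]
    (w : ι → ℝ) (hw : ∀ i, 0 ≤ w i) (hwsum : ∑ i, w i = 1)
    (F : ι → ℝ → ℝ)
    (hmono : ∀ i, ∀ a b : ℝ, 0 ≤ a → a ≤ b → F i a ≤ F i b)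
    (P : ℝ) (hex : ∀ i, ∃ δ : ℝ, 0 ≤ δ ∧ P ≤ F i δ) :
    Finset.univ.inf' Finset.univ_nonempty
        (fun i => sInf {δ : ℝ | 0 ≤ δ ∧ P ≤ F i δ})
      ≤ sInf {δ : ℝ | 0 ≤ δ ∧ P ≤ ∑ i, w i * F i δ} := by
  choose d hd0 hdP using hex
  have hd_le (i : ι) : d i ≤ univ.sup' univ_nonempty d := le_sup' d (mem_univ i)
  have hmix_nonempty : {δ : ℝ | 0 ≤ δ ∧ P ≤ ∑ i, w i * F i δ}.Nonempty :=
    ⟨univ.sup' univ_nonempty d, (hd0 (Classical.arbitrary ι)).trans (hd_le _),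
      le_sum_mul_of_forall_le (fun i _ => hw i) hwsum fun i _ =>
        (hdP i).trans (hmono i _ _ (hd0 i) (hd_le i))⟩
  refine inf'_csInf_le_csInf univ_nonempty hmix_nonempty (fun i _ => ⟨0, fun _ hδ => hδ.1⟩) ?_
  rintro δ ⟨hδ0, hδP⟩
  obtain ⟨i, hi, hPi⟩ := exists_le_of_le_sum_mul (fun i _ => hw i) hwsum hδP
  exact ⟨i, hi, hδ0, hPi⟩
end

section
/- (Inner-product bound for rotated symmetric basis vectors.) Let J ≥ 1 be a natural number, s ∈ (0,1), and let m, k be integers with −J ≤ m ≤ J and −J ≤ k ≤ J. Then the inner product between the rotated symmetric vector |J,m⟩_s and the standard symmetric vector |J,k⟩ in (ℂ²)^{⊗2J} satisfies: if s ≥ 1/2, |⟨J,m|_s |J,k⟩| ≤ √( C(2J, J+k) · C(2J, J−m) · s^{2J+k−m} · (1−s)^{m−k} ), and if s < 1/2, |⟨J,m|_s |J,k⟩| ≤ √( C(2J, J+k) · C(2J, J−m) · s^{m+k} · (1−s)^{2J−m−k} ), where C(·,·) denotes the binomial coefficient and the real exponents are interpreted via the real power function. -/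
open scoped BigOperators

/-- The tensor product `v 0 ⊗ v 1 ⊗ ⋯ ⊗ v (m-1)` of a family of vectors in ℂ²,
realized in coordinates: the component at `x : Fin m → Fin 2` is `∏ i, v i (x i)`. -/
noncomputable def tensorVec {m : ℕ} (v : Fin m → Fin 2 → ℂ) :
    EuclideanSpace ℂ (Fin m → Fin 2) :=
  WithLp.toLp 2 (fun x => ∏ i, v i (x i))

/-- The (normalized) symmetrization of `u^{⊗k} ⊗ w^{⊗(n-k)}`:
`(1/√(n!·k!·(n−k)!)) Σ_{π ∈ S_n} V_π (u^{⊗k} ⊗ w^{⊗(n-k)})`. -/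
noncomputable def symVec (n k : ℕ) (u w : Fin 2 → ℂ) :
    EuclideanSpace ℂ (Fin n → Fin 2) :=
  ((Real.sqrt ((n.factorial : ℝ) * k.factorial * (n - k).factorial) : ℂ))⁻¹ •
    ∑ π : Equiv.Perm (Fin n), tensorVec (fun i => if ((π i : ℕ) < k) then u else w)

/-- `|φ₀⟩ = √s |0⟩ + √(1−s) |1⟩`. -/
noncomputable def phi0 (s : ℝ) : Fin 2 → ℂ :=
  ![(Real.sqrt s : ℂ), (Real.sqrt (1 - s) : ℂ)]

/-- `|φ₀⊥⟩ = √(1−s) |0⟩ − √s |1⟩`. -/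
noncomputable def phi0perp (s : ℝ) : Fin 2 → ℂ :=
  ![(Real.sqrt (1 - s) : ℂ), -(Real.sqrt s : ℂ)]

/-- The standard basis vector `|0⟩` of ℂ². -/
noncomputable def e0 : Fin 2 → ℂ := ![1, 0]

/-- The standard basis vector `|1⟩` of ℂ². -/
noncomputable def e1 : Fin 2 → ℂ := ![0, 1]

/-- The rotated symmetric basis vector `|J,m⟩_s`, the normalized symmetrization
of `|φ₀⟩^{⊗(J+m)} ⊗ |φ₀⊥⟩^{⊗(J−m)}` in `(ℂ²)^{⊗2J}`. -/
noncomputable def rotSym (J : ℕ) (s : ℝ) (m : ℤ) :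
    EuclideanSpace ℂ (Fin (2*J) → Fin 2) :=
  symVec (2*J) (((J : ℤ) + m).toNat) (phi0 s) (phi0perp s)

/-- The standard symmetric basis vector `|J,k⟩`, the normalized symmetrization
of `|0⟩^{⊗(J+k)} ⊗ |1⟩^{⊗(J−k)}` in `(ℂ²)^{⊗2J}`. -/
noncomputable def stdSym (J : ℕ) (k : ℤ) :
    EuclideanSpace ℂ (Fin (2*J) → Fin 2) :=
  symVec (2*J) (((J : ℤ) + k).toNat) e0 e1

/-!
Expanding both symmetrizations over `S_{2J}` turns the inner product into a sum of `((2J)!)²`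
overlaps of product vectors. Such an overlap has modulus `√s ^ (2J - d) * √(1 - s) ^ d`, where `d`
is the number of tensor factors on which the pattern of `J + m` copies of `φ₀` and the pattern of
`J + k` copies of `|0⟩` disagree; counting forces `m - k ≤ d ≤ 2J - m - k`. Bound every overlap
by its value at the extreme admissible `d` (the smallest when `s ≥ 1/2`, the largest when
`s < 1/2`); the normalizations then combine with the `((2J)!)²` terms through
`(2J)! / √((2J)! a! (2J - a)!) = √(C(2J, a))`.
-/

open Finset
open scoped symmDiff

namespace Finset

variable {α : Type*} [DecidableEq α]

lemma card_le_card_add_card_symmDiff (A B : Finset α) : #A ≤ #B + #(A ∆ B) :=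
  calc #A ≤ #(B ∪ A ∆ B) := card_le_card fun i hi => by
        by_cases hB : i ∈ B <;> simp [mem_symmDiff, hi, hB]
    _ ≤ #B + #(A ∆ B) := card_union_le _ _

lemma card_symmDiff_add_card_add_card_le [Fintype α] (A B : Finset α) :
    #(A ∆ B) + #A + #B ≤ 2 * Fintype.card α := by
  have h : #(A ∆ B) ≤ #Aᶜ + #Bᶜ :=
    (card_le_card fun i hi => by
      rw [mem_symmDiff] at hi
      rw [mem_union, mem_compl, mem_compl]
      tauto).trans (card_union_le _ _)
  rw [card_compl, card_compl] at h
  have := card_le_univ A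
  have := card_le_univ B
  omega

end Finset

lemma Fintype.prod_ite_mem_eq_pow_mul_pow {ι M : Type*} [Fintype ι] [DecidableEq ι]
    [CommMonoid M] (D : Finset ι) (x y : M) :
    ∏ i, (if i ∈ D then y else x) = x ^ (Fintype.card ι - #D) * y ^ #D := by
  rw [prod_ite, prod_const, prod_const, filter_mem_eq_inter, univ_inter, mul_comm, filter_not,
    filter_mem_eq_inter, univ_inter, card_sdiff_of_subset (subset_univ D), card_univ]

lemma card_filter_perm_val_lt {n a : ℕ} (ha : a ≤ n) (π : Equiv.Perm (Fin n)) :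
    #{i | (π i : ℕ) < a} = a := by
  rw [card_equiv π (t := {j : Fin n | (j : ℕ) < a}) (by simp), Fin.card_filter_val_lt,
    min_eq_right ha]

lemma Real.sqrt_pow {x : ℝ} (hx : 0 ≤ x) (k : ℕ) : √(x ^ k) = √x ^ k := by
  rw [← Real.sqrt_sq (by positivity : 0 ≤ √x ^ k), ← pow_mul, mul_comm, pow_mul,
    Real.sq_sqrt hx]

lemma Real.rpow_sub_mul_rpow_le {x y : ℝ} (hy : 0 < y) (hyx : y ≤ x) (n : ℝ) {r d : ℝ}
    (hrd : r ≤ d) : x ^ (n - d) * y ^ d ≤ x ^ (n - r) * y ^ r := by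
  have hx : 0 < x := hy.trans_le hyx
  have hsplit : ∀ t : ℝ, x ^ (n - t) * y ^ t = x ^ n * (y / x) ^ t := fun t => by
    rw [Real.rpow_sub hx, Real.div_rpow hy.le hx.le]
    field_simp
  rw [hsplit, hsplit]
  exact mul_le_mul_of_nonneg_left
    (Real.rpow_le_rpow_of_exponent_ge (by positivity) ((div_le_one hx).2 hyx) hrd) (by positivity)

lemma inner_tensorVec {n : ℕ} (v w : Fin n → Fin 2 → ℂ) :
    (inner ℂ (tensorVec v) (tensorVec w) : ℂ)
      = ∏ i, ((starRingEnd ℂ) (v i 0) * w i 0 + (starRingEnd ℂ) (v i 1) * w i 1) := by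
  have hexpand : (inner ℂ (tensorVec v) (tensorVec w) : ℂ)
      = ∑ x : Fin n → Fin 2, ∏ i, ((starRingEnd ℂ) (v i (x i)) * w i (x i)) := by
    simp [tensorVec, PiLp.inner_apply, RCLike.inner_apply, map_prod,
      Finset.prod_mul_distrib, mul_comm]
  rw [hexpand, ← Fintype.prod_sum (fun (i : Fin n) (j : Fin 2) => (starRingEnd ℂ) (v i j) * w i j)]
  exact prod_congr rfl fun i _ => by rw [Fin.sum_univ_two]

lemma norm_inner_tensorVec_phi0_e {n : ℕ} {s : ℝ} (hs0 : 0 ≤ s) (hs1 : s ≤ 1)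
    (A B : Finset (Fin n)) :
    ‖(inner ℂ (tensorVec fun i => if i ∈ A then phi0 s else phi0perp s)
        (tensorVec fun i => if i ∈ B then e0 else e1) : ℂ)‖
      = √(s ^ (n - #(A ∆ B)) * (1 - s) ^ #(A ∆ B)) := by
  have h1s : 0 ≤ 1 - s := by linarith
  rw [inner_tensorVec, norm_prod,
    prod_congr rfl (g := fun i => if i ∈ A ∆ B then √(1 - s) else √s) fun i _ => by
      by_cases hA : i ∈ A <;> by_cases hB : i ∈ B <;>
        simp [hA, hB, mem_symmDiff, phi0, phi0perp, e0, e1, Complex.norm_real],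
    Fintype.prod_ite_mem_eq_pow_mul_pow, Fintype.card_fin, Real.sqrt_mul (by positivity),
    Real.sqrt_pow hs0, Real.sqrt_pow h1s]

lemma sqrt_choose_eq_factorial_div {n a : ℕ} (ha : a ≤ n) :
    √(n.choose a : ℝ) =
      n.factorial / √((n.factorial : ℝ) * a.factorial * (n - a).factorial) := by
  have hfac : (n.choose a : ℝ) * a.factorial * (n - a).factorial = n.factorial := by
    exact_mod_cast Nat.choose_mul_factorial_mul_factorial ha
  rw [eq_div_iff (by positivity), ← Real.sqrt_mul (by positivity),
    show (n.choose a : ℝ) * (n.factorial * a.factorial * (n - a).factorial)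
      = (n.factorial : ℝ) ^ 2 by rw [← hfac]; ring,
    Real.sqrt_sq (by positivity)]

lemma norm_inner_symVec_le {n a k : ℕ} (ha : a ≤ n) (hk : k ≤ n) (u w u' w' : Fin 2 → ℂ)
    {M : ℝ}
    (hM : ∀ π σ : Equiv.Perm (Fin n),
      ‖(inner ℂ (tensorVec fun i => if (π i : ℕ) < a then u else w)
        (tensorVec fun i => if (σ i : ℕ) < k then u' else w') : ℂ)‖ ≤ M) :
    ‖(inner ℂ (symVec n a u w) (symVec n k u' w') : ℂ)‖ ≤ √(n.choose a * n.choose k) * M := by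
  set ca := √((n.factorial : ℝ) * a.factorial * (n - a).factorial)
  set ck := √((n.factorial : ℝ) * k.factorial * (n - k).factorial)
  have hsum : ‖∑ π : Equiv.Perm (Fin n), ∑ σ : Equiv.Perm (Fin n),
      (inner ℂ (tensorVec fun i => if (π i : ℕ) < a then u else w)
        (tensorVec fun i => if (σ i : ℕ) < k then u' else w') : ℂ)‖
      ≤ n.factorial * (n.factorial * M) := by
    refine (norm_sum_le_of_le _ fun π _ => norm_sum_le_of_le _ fun σ _ => hM π σ).trans_eq ?_
    simp [Fintype.card_perm]
  calc ‖(inner ℂ (symVec n a u w) (symVec n k u' w') : ℂ)‖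
      = ca⁻¹ * ck⁻¹ * ‖∑ π : Equiv.Perm (Fin n), ∑ σ : Equiv.Perm (Fin n),
          (inner ℂ (tensorVec fun i => if (π i : ℕ) < a then u else w)
            (tensorVec fun i => if (σ i : ℕ) < k then u' else w') : ℂ)‖ := by
        rw [symVec, symVec, inner_smul_left, inner_smul_right, sum_inner]
        simp_rw [inner_sum]
        rw [norm_mul, norm_mul, map_inv₀, Complex.conj_ofReal, norm_inv, norm_inv,
          Complex.norm_real, Complex.norm_real, Real.norm_of_nonneg (Real.sqrt_nonneg _),
          Real.norm_of_nonneg (Real.sqrt_nonneg _), ← mul_assoc]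
    _ ≤ ca⁻¹ * ck⁻¹ * (n.factorial * (n.factorial * M)) := by gcongr
    _ = √(n.choose a * n.choose k) * M := by
        rw [Real.sqrt_mul (by positivity), sqrt_choose_eq_factorial_div ha,
          sqrt_choose_eq_factorial_div hk]
        ring

lemma norm_inner_rotSym_stdSym_le {J : ℕ} {s : ℝ} (hs0 : 0 ≤ s) (hs1 : s ≤ 1) {m k : ℤ}
    (hm₁ : -(J : ℤ) ≤ m) (hm₂ : m ≤ J) (hk₁ : -(J : ℤ) ≤ k) (hk₂ : k ≤ J) {x y : ℝ}
    (hxy : ∀ d : ℕ, (m : ℝ) - k ≤ d → (d : ℝ) ≤ 2 * J - m - k →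
      s ^ (2 * (J : ℝ) - d) * (1 - s) ^ (d : ℝ) ≤ s ^ x * (1 - s) ^ y) :
    ‖(inner ℂ (rotSym J s m) (stdSym J k) : ℂ)‖ ≤
      √((2 * J).choose ((J : ℤ) + k).toNat * (2 * J).choose ((J : ℤ) - m).toNat
        * s ^ x * (1 - s) ^ y) := by
  set a := ((J : ℤ) + m).toNat
  set b := ((J : ℤ) + k).toNat
  have haJ : (a : ℤ) = J + m := Int.toNat_of_nonneg (by omega)
  have hbJ : (b : ℤ) = J + k := Int.toNat_of_nonneg (by omega)
  have ha : a ≤ 2 * J := by omega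
  have hb : b ≤ 2 * J := by omega
  have hchoose : (2 * J).choose ((J : ℤ) - m).toNat = (2 * J).choose a := by
    rw [← Nat.choose_symm ha]; congr 1; omega
  rw [hchoose, mul_comm ((2 * J).choose b : ℝ), mul_assoc, Real.sqrt_mul (by positivity)]
  refine norm_inner_symVec_le ha hb _ _ _ _ fun π σ => ?_
  set A : Finset (Fin (2 * J)) := {i | (π i : ℕ) < a}
  set B : Finset (Fin (2 * J)) := {i | (σ i : ℕ) < b}
  have hA : #A = a := card_filter_perm_val_lt ha π
  have hB : #B = b := card_filter_perm_val_lt hb σ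
  have hlow := card_le_card_add_card_symmDiff A B
  have hhigh := card_symmDiff_add_card_add_card_le A B
  rw [Fintype.card_fin] at hhigh
  have hterm := norm_inner_tensorVec_phi0_e hs0 hs1 A B
  have hmemA : ∀ i, i ∈ A ↔ (π i : ℕ) < a := by simp [A]
  have hmemB : ∀ i, i ∈ B ↔ (σ i : ℕ) < b := by simp [B]
  simp only [hmemA, hmemB] at hterm
  rw [hterm]
  refine Real.sqrt_le_sqrt ?_
  have hd_low : m - k ≤ #(A ∆ B) := by omega
  have hd_high : (#(A ∆ B) : ℤ) ≤ 2 * J - m - k := by omega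
  have hd := hxy #(A ∆ B) (by exact_mod_cast hd_low) (by exact_mod_cast hd_high)
  have hdn : #(A ∆ B) ≤ 2 * J := (card_le_univ _).trans_eq (Fintype.card_fin _)
  rwa [← Real.rpow_natCast, ← Real.rpow_natCast, Nat.cast_sub hdn, Nat.cast_mul,
    Nat.cast_ofNat]

theorem stmt_5_general (J : ℕ) (s : ℝ) (hs : s ∈ Set.Ioo (0:ℝ) 1)
    (m k : ℤ) (hm₁ : -(J:ℤ) ≤ m) (hm₂ : m ≤ (J:ℤ))
    (hk₁ : -(J:ℤ) ≤ k) (hk₂ : k ≤ (J:ℤ)) :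
    ((1:ℝ)/2 ≤ s →
      ‖(inner ℂ (rotSym J s m) (stdSym J k) : ℂ)‖ ≤
        Real.sqrt ((((2*J).choose (((J:ℤ)+k).toNat) : ℝ))
          * (((2*J).choose (((J:ℤ)-m).toNat) : ℝ))
          * s ^ ((2*(J:ℝ)) + (k:ℝ) - (m:ℝ)) * (1 - s) ^ ((m:ℝ) - (k:ℝ)))) ∧
    (s < (1:ℝ)/2 →
      ‖(inner ℂ (rotSym J s m) (stdSym J k) : ℂ)‖ ≤
        Real.sqrt ((((2*J).choose (((J:ℤ)+k).toNat) : ℝ))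
          * (((2*J).choose (((J:ℤ)-m).toNat) : ℝ))
          * s ^ ((m:ℝ) + (k:ℝ)) * (1 - s) ^ ((2*(J:ℝ)) - (m:ℝ) - (k:ℝ)))) := by
  obtain ⟨hs0, hs1⟩ := hs
  constructor
  · intro hs_half
    refine norm_inner_rotSym_stdSym_le hs0.le hs1.le hm₁ hm₂ hk₁ hk₂ fun d hd _ => ?_
    rw [show 2 * (J : ℝ) + k - m = 2 * J - (m - k) by ring]
    exact Real.rpow_sub_mul_rpow_le (by linarith) (by linarith) _ hd
  · intro hs_half
    refine norm_inner_rotSym_stdSym_le hs0.le hs1.le hm₁ hm₂ hk₁ hk₂ fun d _ hd => ?_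
    have h := Real.rpow_sub_mul_rpow_le hs0 (by linarith : s ≤ 1 - s) (2 * J)
      (r := m + k) (d := 2 * J - d) (by linarith)
    rwa [sub_sub_cancel, ← sub_sub, mul_comm, mul_comm ((1 - s) ^ _)] at h

/-- Inner-product bound for rotated symmetric basis vectors. -/
theorem stmt_5 (J : ℕ) (hJ : 1 ≤ J) (s : ℝ) (hs : s ∈ Set.Ioo (0:ℝ) 1)
    (m k : ℤ) (hm₁ : -(J:ℤ) ≤ m) (hm₂ : m ≤ (J:ℤ))
    (hk₁ : -(J:ℤ) ≤ k) (hk₂ : k ≤ (J:ℤ)) :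
    ((1:ℝ)/2 ≤ s →
      ‖(inner ℂ (rotSym J s m) (stdSym J k) : ℂ)‖ ≤
        Real.sqrt ((((2*J).choose (((J:ℤ)+k).toNat) : ℝ))
          * (((2*J).choose (((J:ℤ)-m).toNat) : ℝ))
          * s ^ ((2*(J:ℝ)) + (k:ℝ) - (m:ℝ)) * (1 - s) ^ ((m:ℝ) - (k:ℝ)))) ∧
    (s < (1:ℝ)/2 →
      ‖(inner ℂ (rotSym J s m) (stdSym J k) : ℂ)‖ ≤
        Real.sqrt ((((2*J).choose (((J:ℤ)+k).toNat) : ℝ))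
          * (((2*J).choose (((J:ℤ)-m).toNat) : ℝ))
          * s ^ ((m:ℝ) + (k:ℝ)) * (1 - s) ^ ((2*(J:ℝ)) - (m:ℝ) - (k:ℝ)))) :=
  stmt_5_general J s hs m k hm₁ hm₂ hk₁ hk₂
end

section
/- (Fisher information of the local clock measurement, fixed purity.) For every real a with 0 ≤ a < 1, (1/(2π)) ∫₀^{2π} a² sin²τ / (1 + a cos τ) dτ = 1 − √(1 − a²). In particular, for the outcome distribution P_{T,p}(τ) = (1/(2π))(1 + (2p−1)cos(τ−T)) with p ∈ (1/2, 1), the classical Fisher information with respect to T equals 1 − √(1 − (2p−1)²) = 1 − 2√(p(1−p)). -/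
/-!
Since `a² sin² x = (1 - a cos x)(1 + a cos x) - (1 - a²)`, the integrand is
`1 - a cos x - (1 - a²)/(1 + a cos x)`, and everything reduces to the classical integral
`∫₀^{2π} dx/(1 + a cos x) = 2π/√(1 - a²)`. The Fisher information integrand is the same function
of `τ - T` divided by `2π`, and periodicity removes the shift by `T`.
-/

open Real intervalIntegral

section

variable {a : ℝ}

lemma one_add_mul_cos_pos (ha : |a| < 1) (x : ℝ) : 0 < 1 + a * cos x := by
  have : |a * cos x| < 1 := by
    rw [abs_mul]
    exact lt_of_le_of_lt (mul_le_of_le_one_right (abs_nonneg a) (abs_cos_le_one x)) ha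
  linarith [neg_abs_le (a * cos x)]

lemma one_sub_sq_pos (ha : |a| < 1) : 0 < 1 - a ^ 2 :=
  sub_pos.2 ((sq_lt_one_iff_abs_lt_one a).2 ha)

lemma continuous_div_one_add_mul_cos {f : ℝ → ℝ} (hf : Continuous f) (ha : |a| < 1) :
    Continuous fun x => f x / (1 + a * cos x) :=
  hf.div (by fun_prop) fun x => (one_add_mul_cos_pos ha x).ne'

/-- A continuous antiderivative of `√(1 - a²)/(1 + a cos x)` on all of `ℝ`, unlike the
half-angle substitution `2 arctan (√((1 - a)/(1 + a)) tan (x/2))`, which jumps at odd multiples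
of `π`. -/
lemma hasDerivAt_sub_two_mul_arctan (ha : |a| < 1) (x : ℝ) :
    HasDerivAt (fun x => x - 2 * arctan (a * sin x / (1 + √(1 - a ^ 2) + a * cos x)))
      (√(1 - a ^ 2) / (1 + a * cos x)) x := by
  set b := √(1 - a ^ 2)
  have hb2 : b ^ 2 = 1 - a ^ 2 := sq_sqrt (one_sub_sq_pos ha).le
  have hb : 0 < b := sqrt_pos.2 (one_sub_sq_pos ha)
  have hpos := one_add_mul_cos_pos ha x
  have hD : 0 < 1 + b + a * cos x := by linarith
  have hquot := ((hasDerivAt_sin x).const_mul a).div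
    (((hasDerivAt_cos x).const_mul a).const_add (1 + b)) hD.ne'
  refine ((hasDerivAt_id x).sub (hquot.arctan.const_mul 2)).congr_deriv ?_
  have hsc := sin_sq_add_cos_sq x
  simp only [Pi.div_apply]
  field_simp
  linear_combination -(1 + b + a * cos x) * (hb2 + a ^ 2 * hsc)

theorem integral_inv_one_add_mul_cos (ha : |a| < 1) :
    ∫ x in (0 : ℝ)..2 * π, (1 + a * cos x)⁻¹ = 2 * π / √(1 - a ^ 2) := by
  have hb : 0 < √(1 - a ^ 2) := sqrt_pos.2 (one_sub_sq_pos ha)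
  have hcont := continuous_div_one_add_mul_cos continuous_const (f := fun _ => √(1 - a ^ 2)) ha
  have hFTC := integral_eq_sub_of_hasDerivAt (fun x _ => hasDerivAt_sub_two_mul_arctan ha x)
    (hcont.intervalIntegrable 0 (2 * π))
  simp only [sin_zero, sin_two_pi, mul_zero, zero_div, arctan_zero, sub_zero] at hFTC
  simp only [div_eq_mul_inv, integral_const_mul] at hFTC
  rw [eq_div_iff hb.ne', mul_comm, hFTC]

lemma sq_mul_sin_sq_div_one_add_mul_cos (ha : |a| < 1) (x : ℝ) :
    a ^ 2 * sin x ^ 2 / (1 + a * cos x) = 1 - a * cos x - (1 - a ^ 2) * (1 + a * cos x)⁻¹ := by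
  have := one_add_mul_cos_pos ha x
  field_simp
  linear_combination a ^ 2 * sin_sq_add_cos_sq x

theorem integral_sq_mul_sin_sq_div_one_add_mul_cos (ha : |a| < 1) :
    ∫ x in (0 : ℝ)..2 * π, a ^ 2 * sin x ^ 2 / (1 + a * cos x) = 2 * π * (1 - √(1 - a ^ 2)) := by
  have hb2 : √(1 - a ^ 2) ^ 2 = 1 - a ^ 2 := sq_sqrt (one_sub_sq_pos ha).le
  have hb : 0 < √(1 - a ^ 2) := sqrt_pos.2 (one_sub_sq_pos ha)
  have hinv : Continuous fun x => (1 + a * cos x)⁻¹ := by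
    simpa only [one_div] using continuous_div_one_add_mul_cos continuous_const (f := fun _ => 1) ha
  simp_rw [sq_mul_sin_sq_div_one_add_mul_cos ha]
  rw [integral_sub ((by fun_prop : Continuous fun x => 1 - a * cos x).intervalIntegrable _ _)
      ((hinv.const_mul _).intervalIntegrable _ _),
    integral_sub intervalIntegrable_const ((continuous_cos.const_mul a).intervalIntegrable _ _),
    integral_const_mul, integral_const_mul, integral_cos, integral_inv_one_add_mul_cos ha]
  simp only [integral_one, sin_two_pi, sin_zero, sub_zero, mul_zero]
  field_simp
  linear_combination hb2

/-- The outcome density `P_{T,p}(τ)` of the covariant measurement, with `a = 2p - 1`. -/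
noncomputable def clockDensity (a T τ : ℝ) : ℝ := (1 + a * cos (τ - T)) / (2 * π)

lemma hasDerivAt_log_clockDensity (ha : |a| < 1) (τ T : ℝ) :
    HasDerivAt (fun T' => log (clockDensity a T' τ))
      (a * sin (τ - T) / (1 + a * cos (τ - T))) T := by
  have hpos := one_add_mul_cos_pos ha (τ - T)
  have hshift : HasDerivAt (fun T' => τ - T') (-1) T := by
    simpa using (hasDerivAt_id T).const_sub τ
  have hdens := (((hasDerivAt_cos (τ - T)).comp T hshift).const_mul a).const_add 1
    |>.div_const (2 * π)
  refine (hdens.log (by simp only [Function.comp_apply]; positivity)).congr_deriv ?_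
  simp only [Function.comp_apply]
  field_simp

lemma deriv_log_clockDensity_sq_mul (ha : |a| < 1) (τ T : ℝ) :
    (deriv (fun T' => log (clockDensity a T' τ)) T) ^ 2 * clockDensity a T τ
      = a ^ 2 * sin (τ - T) ^ 2 / (1 + a * cos (τ - T)) / (2 * π) := by
  have := one_add_mul_cos_pos ha (τ - T)
  rw [(hasDerivAt_log_clockDensity ha τ T).deriv, clockDensity]
  field_simp

theorem integral_deriv_log_clockDensity_sq_mul (ha : |a| < 1) (T : ℝ) :
    ∫ τ in (0 : ℝ)..2 * π, (deriv (fun T' => log (clockDensity a T' τ)) T) ^ 2 * clockDensity a T τ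
      = 1 - √(1 - a ^ 2) := by
  set f := fun x => a ^ 2 * sin x ^ 2 / (1 + a * cos x)
  have hper : Function.Periodic f (2 * π) := fun x => by simp only [f, sin_add_two_pi, cos_add_two_pi]
  simp_rw [deriv_log_clockDensity_sq_mul ha]
  rw [integral_div, integral_comp_sub_right f T, zero_sub, sub_eq_neg_add,
    hper.intervalIntegral_add_eq (-T) 0, zero_add, integral_sq_mul_sin_sq_div_one_add_mul_cos ha]
  field_simp

lemma sqrt_one_sub_two_mul_sub_one_sq (p : ℝ) : √(1 - (2 * p - 1) ^ 2) = 2 * √(p * (1 - p)) := by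
  rw [show 1 - (2 * p - 1) ^ 2 = 2 ^ 2 * (p * (1 - p)) by ring, sqrt_mul (by positivity),
    sqrt_sq zero_le_two]

end

/-- Fisher information of the local clock measurement, fixed
purity: `(1/2π)∫₀^{2π} a² sin²τ/(1 + a cos τ) dτ = 1 − √(1−a²)` for
`0 ≤ a < 1`; in particular, for the outcome distribution
`P_{T,p}(τ) = (1/2π)(1 + (2p−1)cos(τ−T))` with `p ∈ (1/2,1)`, the classical
Fisher information with respect to `T` equals
`1 − √(1−(2p−1)²) = 1 − 2√(p(1−p))`. -/
theorem stmt_10 :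
    (∀ a : ℝ, 0 ≤ a → a < 1 →
      (1/(2*Real.pi)) * ∫ τ in (0:ℝ)..(2*Real.pi),
          a^2 * (Real.sin τ)^2 / (1 + a * Real.cos τ)
        = 1 - Real.sqrt (1 - a^2)) ∧
    (∀ p : ℝ, p ∈ Set.Ioo (1/2 : ℝ) 1 → ∀ T : ℝ,
      (∫ τ in (0:ℝ)..(2*Real.pi),
          (deriv (fun T' => Real.log
            ((1 + (2*p - 1) * Real.cos (τ - T')) / (2*Real.pi))) T)^2
            * ((1 + (2*p - 1) * Real.cos (τ - T)) / (2*Real.pi)))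
        = 1 - 2 * Real.sqrt (p*(1-p))) ∧
    (∀ p : ℝ, p ∈ Set.Ioo (1/2 : ℝ) 1 →
      1 - Real.sqrt (1 - (2*p - 1)^2) = 1 - 2 * Real.sqrt (p*(1-p))) := by
  refine ⟨fun a ha0 ha1 => ?_, fun p ⟨hp0, hp1⟩ T => ?_, fun p _ => ?_⟩
  · rw [integral_sq_mul_sin_sq_div_one_add_mul_cos (abs_lt.mpr ⟨by linarith, ha1⟩)]
    field_simp
  · rw [← sqrt_one_sub_two_mul_sub_one_sq]
    exact integral_deriv_log_clockDensity_sq_mul (abs_lt.mpr ⟨by linarith, by linarith⟩) T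
  · rw [sqrt_one_sub_two_mul_sub_one_sq]
end

section
/- (Standard deviation bounds the inaccuracy.) Let (Ω, μ) be a probability space and X : Ω → ℝ a square-integrable random variable with mean T (i.e. ∫ X dμ = T) and variance σ². Fix P ∈ (0,1) and define the inaccuracy δ(P) = inf{δ ≥ 0 : μ{ω : |X(ω) − T| ≤ δ/2} ≥ P}. Then σ² ≥ ((1 − P)/4) · δ(P)²; in particular σ ≥ √((1−P)/4) · δ(P). -/
open MeasureTheory

/-! By Chebyshev's inequality `μ(|X - T| > δ/2) ≤ σ² / (δ/2)²`, every `δ` with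
`(1 - P) (δ/2)² > σ²` is admissible in the infimum, so `δ(P) ≤ 2 σ / √(1 - P)`. -/

open ProbabilityTheory Set in
theorem one_sub_variance_div_sq_le_measure_abs_sub_le {Ω : Type*} [MeasurableSpace Ω]
    {μ : Measure Ω} [IsProbabilityMeasure μ] {X : Ω → ℝ} (hX : MemLp X 2 μ) {c : ℝ}
    (hc : 0 < c) :
    1 - variance X μ / c ^ 2 ≤ (μ {ω | |X ω - μ[X]| ≤ c}).toReal := by
  set A := {ω | |X ω - μ[X]| ≤ c}
  have htail : (μ Aᶜ).toReal ≤ variance X μ / c ^ 2 := by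
    refine ENNReal.toReal_le_of_le_ofReal (div_nonneg (variance_nonneg X μ) (sq_nonneg c)) ?_
    refine (measure_mono fun ω hω => ?_).trans (meas_ge_le_variance_div_sq hX hc)
    exact (not_le.mp (show ¬|X ω - μ[X]| ≤ c from hω)).le
  have hcover : 1 ≤ (μ A).toReal + (μ Aᶜ).toReal := by
    rw [← ENNReal.toReal_add (measure_ne_top μ A) (measure_ne_top μ Aᶜ)]
    calc 1 = (μ univ).toReal := by simp
      _ ≤ (μ A + μ Aᶜ).toReal := ENNReal.toReal_mono (by finiteness) (measure_univ_le_add_compl A)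
  linarith

open ProbabilityTheory Set in
theorem mul_sq_sInf_le_variance {Ω : Type*} [MeasurableSpace Ω] {μ : Measure Ω}
    [IsProbabilityMeasure μ] {X : Ω → ℝ} (hX : MemLp X 2 μ) {P : ℝ} (hP : P < 1) :
    (1 - P) / 4 * sInf {δ : ℝ | 0 ≤ δ ∧ P ≤ (μ {ω | |X ω - μ[X]| ≤ δ / 2}).toReal} ^ 2
      ≤ variance X μ := by
  set S := {δ : ℝ | 0 ≤ δ ∧ P ≤ (μ {ω | |X ω - μ[X]| ≤ δ / 2}).toReal}
  have hP' : 0 < 1 - P := by linarith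
  set r := 2 * √(variance X μ / (1 - P))
  have hr : 0 ≤ r := by positivity
  have hsub : Ioi r ⊆ S := by
    intro d (hd : r < d)
    have hvar : variance X μ / (d / 2) ^ 2 < 1 - P := by
      have hsqrt : √(variance X μ / (1 - P)) < d / 2 := by linarith
      rw [div_lt_iff₀ (pow_pos (by linarith) 2), mul_comm, ← div_lt_iff₀ hP']
      exact Real.lt_sq_of_sqrt_lt hsqrt
    have hcheb := one_sub_variance_div_sq_le_measure_abs_sub_le hX (c := d / 2) (by linarith)
    exact ⟨by linarith, by linarith⟩
  have hnonneg : 0 ≤ sInf S := Real.sInf_nonneg fun _ h => h.1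
  have hle : sInf S ≤ r :=
    (csInf_le_csInf ⟨0, fun _ h => h.1⟩ nonempty_Ioi hsub).trans_eq csInf_Ioi
  calc (1 - P) / 4 * sInf S ^ 2 ≤ (1 - P) / 4 * r ^ 2 := by gcongr
    _ = variance X μ := by
      rw [mul_pow, Real.sq_sqrt (div_nonneg (variance_nonneg X μ) hP'.le)]
      field_simp
      ring

theorem Real.sqrt_mul_le_sqrt_of_mul_sq_le {a x b : ℝ} (h : a * x ^ 2 ≤ b) : √a * x ≤ √b := by
  rcases le_or_gt 0 x with hx | hx
  · calc √a * x = √(a * x ^ 2) := by rw [Real.sqrt_mul' a (sq_nonneg x), Real.sqrt_sq hx]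
      _ ≤ √b := Real.sqrt_le_sqrt h
  · exact (mul_nonpos_of_nonneg_of_nonpos (Real.sqrt_nonneg a) hx.le).trans (Real.sqrt_nonneg b)

theorem stmt_15_general {Ω : Type*} [MeasurableSpace Ω] (μ : Measure Ω)
    [IsProbabilityMeasure μ] (X : Ω → ℝ)
    (hX2 : MemLp X 2 μ) (T : ℝ) (hmean : ∫ ω, X ω ∂μ = T)
    (σ2 : ℝ) (hvar : ∫ ω, (X ω - T)^2 ∂μ = σ2)
    (P : ℝ) (hP : P ∈ Set.Ioo (0:ℝ) 1) :
    ((1 - P)/4)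
        * (sInf {δ : ℝ | 0 ≤ δ ∧ P ≤ (μ {ω | |X ω - T| ≤ δ/2}).toReal})^2
      ≤ σ2 ∧
    Real.sqrt ((1 - P)/4)
        * sInf {δ : ℝ | 0 ≤ δ ∧ P ≤ (μ {ω | |X ω - T| ≤ δ/2}).toReal}
      ≤ Real.sqrt σ2 := by
  subst hmean
  have hσ2 : ProbabilityTheory.variance X μ = σ2 := by
    rw [ProbabilityTheory.variance_eq_integral hX2.aemeasurable, hvar]
  have hmain := hσ2 ▸ mul_sq_sInf_le_variance hX2 hP.2
  exact ⟨hmain, Real.sqrt_mul_le_sqrt_of_mul_sq_le hmain⟩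

/-- Standard deviation bounds the inaccuracy: for a
square-integrable random variable `X` with mean `T` and variance `σ²` on a
probability space, and `P ∈ (0,1)`, the inaccuracy
`δ(P) = inf{δ ≥ 0 : μ(|X − T| ≤ δ/2) ≥ P}` satisfies
`σ² ≥ ((1−P)/4)·δ(P)²`; in particular `σ ≥ √((1−P)/4)·δ(P)`. -/
theorem stmt_15 {Ω : Type*} [MeasurableSpace Ω] (μ : Measure Ω)
    [IsProbabilityMeasure μ] (X : Ω → ℝ) (hXmeas : Measurable X)
    (hX2 : MemLp X 2 μ) (T : ℝ) (hmean : ∫ ω, X ω ∂μ = T)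
    (σ2 : ℝ) (hvar : ∫ ω, (X ω - T)^2 ∂μ = σ2)
    (P : ℝ) (hP : P ∈ Set.Ioo (0:ℝ) 1) :
    ((1 - P)/4)
        * (sInf {δ : ℝ | 0 ≤ δ ∧ P ≤ (μ {ω | |X ω - T| ≤ δ/2}).toReal})^2
      ≤ σ2 ∧
    Real.sqrt ((1 - P)/4)
        * sInf {δ : ℝ | 0 ≤ δ ∧ P ≤ (μ {ω | |X ω - T| ≤ δ/2}).toReal}
      ≤ Real.sqrt σ2 :=
  stmt_15_general μ X hX2 T hmean σ2 hvar P hP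
end
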